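/- arXiv:2409.19742 — 6 statements merged into one kernel-verified Lean document; each statement's English description precedes it below -/
import Mathlib

section
/- Let E ⊆ F be a finite Galois field extension of degree d, and let E ⊆ E' be another finite separable extension. Then there exists a divisor m of d and a decomposition F ⊗_E E' ≅ ∏_{i=0}^{m-1} F_i such that each F_i is a Galois field extension of E' of degree d/m. -/
open TensorProduct

/-- A decomposition of an `E'`-algebra `A` as a finite product of `m` Galois field
extensions of `E'`, each of degree `k`. -/
structure PiGaloisDecomp (E' : Type) [Field E'] (A : Type) [Ring A] [Algebra E' A]
    (k m : ℕ) where
  /-- The factor fields. -/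
  F : Fin m → Type
  [fld : ∀ i, Field (F i)]
  [alg : ∀ i, Algebra E' (F i)]
  /-- Each factor is a Galois extension of `E'`. -/
  galois : ∀ i, IsGalois E' (F i)
  /-- Each factor has degree `k` over `E'`. -/
  rank : ∀ i, Module.finrank E' (F i) = k
  /-- The `E'`-algebra isomorphism with the product of the factors. -/
  iso : A ≃ₐ[E'] ((i : Fin m) → F i)

/-! Write `F = E(θ)` and let `p` be the minimal polynomial of `θ`. As `F/E` is separable,
`E' ⊗_E F` is a finite unramified, hence reduced, `E'`-algebra, so it is the product of its
residue fields. Each residue field is generated over `E'` by the image of `1 ⊗ θ`, a root of `p`,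
and `p` splits there because it splits in `F`. So every factor is a splitting field over `E'` of
the separable polynomial `p`, i.e. one and the same Galois extension `L/E'`, and comparing
dimensions gives `d = m · [L : E']`. -/

open Polynomial

theorem exists_dvd_piGaloisDecomp_of_algEquiv_pi {K A L ι : Type} [Field K] [Ring A]
    [Algebra K A] [Field L] [Algebra K L] [FiniteDimensional K L] [IsGalois K L] [Finite ι]
    (e : A ≃ₐ[K] (ι → L)) :
    ∃ m : ℕ, m ∣ Module.finrank K A ∧
      Nonempty (PiGaloisDecomp K A (Module.finrank K A / m) m) := by
  have := Fintype.ofFinite ι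
  set m := Fintype.card ι
  have hrank : Module.finrank K A = m * Module.finrank K L := by
    rw [e.toLinearEquiv.finrank_eq, Module.finrank_pi_fintype, Finset.sum_const,
      Finset.card_univ, smul_eq_mul]
  refine ⟨m, ⟨_, hrank⟩, ⟨⟨fun _ => L, fun _ => inferInstance, fun i => ?_,
    e.trans (AlgEquiv.piCongrLeft' K (fun _ => L) (Fintype.equivFin ι))⟩⟩⟩
  rw [hrank, Nat.mul_div_cancel_left _ (Fin.pos i)]

theorem isSplittingField_of_tensorProduct_surjective {E F E' K : Type*}
    [Field E] [Field F] [Field E'] [Field K] [Algebra E F] [Algebra E E'] [Algebra E' K]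
    [Normal E F] {θ : F}
    (hθ : Algebra.adjoin E {θ} = ⊤) (f : E' ⊗[E] F →ₐ[E'] K) (hf : Function.Surjective f) :
    IsSplittingField E' K ((minpoly E θ).map (algebraMap E E')) := by
  let ψ : F →+* K := (f : E' ⊗[E] F →+* K).comp Algebra.TensorProduct.includeRight.toRingHom
  have hcomp : (algebraMap E' K).comp (algebraMap E E') = ψ.comp (algebraMap E F) := by
    rw [RingHom.comp_assoc, AlgHom.toRingHom_eq_coe, AlgHom.comp_algebraMap,
      IsScalarTower.algebraMap_eq E E' (E' ⊗[E] F), ← RingHom.comp_assoc,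
      AlgHom.comp_algebraMap]
  refine ⟨?_, ?_⟩
  · rw [Polynomial.map_map, hcomp, ← Polynomial.map_map]
    exact (Normal.splits inferInstance θ).map _
  · have hgen : Algebra.adjoin E' (f '' ((1 ⊗ₜ[E] ·) '' {θ})) = ⊤ := by
      rw [Algebra.adjoin_image, Algebra.TensorProduct.adjoin_one_tmul_image_eq_top _ hθ,
        Algebra.map_top, AlgHom.range_eq_top]
      exact hf
    simp only [Set.image_singleton] at hgen
    rw [eq_top_iff, ← hgen]
    refine Algebra.adjoin_mono (Set.singleton_subset_iff.mpr ?_)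
    rw [mem_rootSet, aeval_def, eval₂_map, hcomp]
    refine ⟨Polynomial.map_ne_zero (minpoly.ne_zero (Algebra.IsIntegral.isIntegral θ)), ?_⟩
    rw [show f (1 ⊗ₜ θ) = ψ θ from rfl, ← hom_eval₂, ← aeval_def, minpoly.aeval, map_zero]

attribute [local instance] IsArtinianRing.fieldOfSubtypeIsMaximal in
noncomputable def tensorProductEquivPiSplittingField {E F E' : Type*}
    [Field E] [Field F] [Field E'] [Algebra E F] [FiniteDimensional E F] [IsGalois E F]
    [Algebra E E'] {θ : F}
    (hθ : Algebra.adjoin E {θ} = ⊤) :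
    E' ⊗[E] F ≃ₐ[E']
      (MaximalSpectrum (E' ⊗[E] F) → ((minpoly E θ).map (algebraMap E E')).SplittingField) :=
  haveI := Algebra.FormallyUnramified.of_isSeparable E F
  haveI := Algebra.FormallyUnramified.isReduced_of_field E' (E' ⊗[E] F)
  haveI := IsArtinianRing.of_finite E' (E' ⊗[E] F)
  ((IsArtinianRing.equivPi _).restrictScalars E').trans <| AlgEquiv.piCongrRight fun I =>
    haveI := isSplittingField_of_tensorProduct_surjective hθ (Ideal.Quotient.mkₐ E' I.asIdeal)
      Ideal.Quotient.mk_surjective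
    IsSplittingField.algEquiv _ _

theorem tensorProduct_galois_decomposition_general
    (E F E' : Type) [Field E] [Field F] [Field E']
    [Algebra E F] [FiniteDimensional E F] [IsGalois E F]
    [Algebra E E'] :
    ∃ m : ℕ, m ∣ Module.finrank E F ∧
      Nonempty (PiGaloisDecomp E' (E' ⊗[E] F) (Module.finrank E F / m) m) := by
  obtain ⟨θ, hθ⟩ := Field.exists_primitive_element E F
  have hθ' : Algebra.adjoin E {θ} = ⊤ := by simpa using hθ
  have : IsGalois E' ((minpoly E θ).map (algebraMap E E')).SplittingField :=
    IsGalois.of_separable_splitting_field (p := (minpoly E θ).map (algebraMap E E'))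
      (Separable.map (Algebra.IsSeparable.isSeparable E θ))
  have := IsArtinianRing.of_finite E' (E' ⊗[E] F)
  rw [← Module.finrank_baseChange (R := E') (S := E)]
  exact exists_dvd_piGaloisDecomp_of_algEquiv_pi (tensorProductEquivPiSplittingField hθ')

/-- **Splitting of a Galois extension after a separable base change.**
Let `F/E` be a finite Galois extension of degree `d`, and let `E'/E` be a finite separable
extension.  Then there is a divisor `m` of `d` and a decomposition
`F ⊗_E E' ≅ ∏_{i=0}^{m-1} F_i` such that each `F_i` is a Galois field extension of `E'`
of degree `d/m`. -/
theorem tensorProduct_galois_decomposition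
    (E F E' : Type) [Field E] [Field F] [Field E']
    [Algebra E F] [FiniteDimensional E F] [IsGalois E F]
    [Algebra E E'] [FiniteDimensional E E'] [Algebra.IsSeparable E E'] :
    ∃ m : ℕ, m ∣ Module.finrank E F ∧
      Nonempty (PiGaloisDecomp E' (E' ⊗[E] F) (Module.finrank E F / m) m) :=
  tensorProduct_galois_decomposition_general E F E'
end

section
/- Let 𝒪_K be a complete discrete valuation ring with uniformizer π, and let R be a normal integral domain over 𝒪_K. Let X = Spec(R) and suppose the mod-π fiber X_k is irreducible. If the set of closed points of X_k that are reductions of 𝒪_{K'}-points of X for finite unramified extensions K'/K is Zariski dense in X_k, then X_k is generically reduced, i.e., the valuation of π at the generic point of (X_k)_red is 1. -/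
/-!
An unramified point `φ : R → 𝒪'` sends `π` to a uniformizer of `𝒪'`.  If `π` lay in
`(𝔭 R_𝔭)²`, then `s π ∈ 𝔭²` for some `s ∉ 𝔭`.  Density provides an unramified point whose
reduction avoids `s`, so that `φ s` is a unit, and which, the fiber being irreducible,
specialises `𝔭`, so that `φ(𝔭²) ⊆ 𝔪'²`.  Then the uniformizer `φ(s π)` lies in `𝔪'²`,
which is impossible in a discrete valuation ring.
-/

/-- A witness that the prime `𝔮` of `R` (a closed point of the special fiber) is the
reduction of an `𝒪_{K'}`-point of `X = Spf R` for a finite unramified extension `K'/K`: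
a section `φ : R → 𝒪'` into a discrete valuation ring `𝒪'` finite over `𝒪 = 𝒪_K`,
compatible with the structure map, in which `π` remains a uniformizer (unramifiedness),
and whose reduction cuts out `𝔮`. -/
structure UnramifiedSection (O : Type) [CommRing O] (R : Type) [CommRing R] [Algebra O R]
    (π : O) (𝔮 : Ideal R) where
  /-- The valuation ring of the unramified extension. -/
  O' : Type
  [commRing : CommRing O']
  [isDomain : IsDomain O']
  [dvr : IsDiscreteValuationRing O']
  /-- The extension of valuation rings. -/
  ι : O →+* O'
  /-- The point of `X`. -/
  φ : R →+* O'
  compat : φ.comp (algebraMap O R) = ι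
  /-- `𝒪'` is finite over `𝒪`. -/
  finite : ι.Finite
  /-- Unramifiedness: `π` remains a uniformizer of `𝒪'`. -/
  unramified : Irreducible (ι π)
  /-- The reduction of the point is the closed point `𝔮`. -/
  reduction : 𝔮 = (IsLocalRing.maximalIdeal O').comap φ

open IsLocalRing

namespace IsDiscreteValuationRing

variable {A : Type*} [CommRing A] [IsDomain A] [IsDiscreteValuationRing A]

theorem irreducible_iff_mem_maximalIdeal_and_notMem_maximalIdeal_sq {x : A} :
    Irreducible x ↔ x ∈ IsLocalRing.maximalIdeal A ∧ x ∉ IsLocalRing.maximalIdeal A ^ 2 := by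
  constructor
  · intro hx
    refine ⟨(mem_maximalIdeal x).mpr hx.not_isUnit, ?_⟩
    rw [hx.maximalIdeal_eq, Ideal.span_singleton_pow, Ideal.mem_span_singleton]
    rintro ⟨c, hc⟩
    have hdecomp : x = x * (x * c) := hc.trans (by ring)
    exact hx.not_isUnit ((hx.isUnit_or_isUnit hdecomp).elim id isUnit_of_mul_isUnit_left)
  · rintro ⟨hmem, hsq⟩
    obtain ⟨ϖ, hϖ⟩ := exists_irreducible A
    have hdvd {y : A} (hy : ¬IsUnit y) : ϖ ∣ y := by
      rwa [← Ideal.mem_span_singleton, ← hϖ.maximalIdeal_eq, mem_maximalIdeal]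
    obtain ⟨y, rfl⟩ := hdvd ((mem_maximalIdeal x).mp hmem)
    by_cases hy : IsUnit y
    · exact (irreducible_mul_isUnit hy).mpr hϖ
    · obtain ⟨z, rfl⟩ := hdvd hy
      rw [hϖ.maximalIdeal_eq, Ideal.span_singleton_pow, Ideal.mem_span_singleton] at hsq
      exact absurd ⟨z, by ring⟩ hsq

end IsDiscreteValuationRing

namespace UnramifiedSection

attribute [local instance] UnramifiedSection.commRing UnramifiedSection.isDomain
  UnramifiedSection.dvr

variable {O R : Type} [CommRing O] [CommRing R] [Algebra O R] {π : O} {𝔮 : Ideal R}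
  (S : UnramifiedSection O R π 𝔮)

theorem irreducible_φ_algebraMap : Irreducible (S.φ (algebraMap O R π)) := by
  simpa [← S.compat] using S.unramified

theorem isUnit_φ_of_notMem {s : R} (hs : s ∉ 𝔮) : IsUnit (S.φ s) := by
  by_contra h
  exact hs (S.reduction ▸ Ideal.mem_comap.mpr ((mem_maximalIdeal _).mpr h))

theorem φ_mem_maximalIdeal_pow {I : Ideal R} (hI : I ≤ 𝔮) {n : ℕ} {a : R} (ha : a ∈ I ^ n) :
    S.φ a ∈ maximalIdeal S.O' ^ n := by
  have hmap : I.map S.φ ≤ maximalIdeal S.O' := Ideal.map_le_iff_le_comap.mpr (S.reduction ▸ hI)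
  exact Ideal.pow_right_mono hmap n (Ideal.map_pow S.φ I n ▸ Ideal.mem_map_of_mem S.φ ha)

theorem mul_algebraMap_notMem_sq (S : UnramifiedSection O R π 𝔮) {𝔭 : Ideal R} (h𝔭 : 𝔭 ≤ 𝔮)
    {s : R} (hs : s ∉ 𝔮) : s * algebraMap O R π ∉ 𝔭 ^ 2 := by
  intro hsq
  have hirr : Irreducible (S.φ (s * algebraMap O R π)) := by
    rw [map_mul]
    exact (irreducible_isUnit_mul (S.isUnit_φ_of_notMem hs)).mpr S.irreducible_φ_algebraMap
  exact (IsDiscreteValuationRing.irreducible_iff_mem_maximalIdeal_and_notMem_maximalIdeal_sq.mp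
    hirr).2 (S.φ_mem_maximalIdeal_pow h𝔭 hsq)

end UnramifiedSection

theorem generically_reduced_of_dense_unramified_points_general
    (O : Type) [CommRing O]
    (π : O)
    (R : Type) [CommRing R] [Algebra O R]
    (𝔭 : Ideal R) [𝔭.IsPrime]
    [IsDomain (Localization.AtPrime 𝔭)]
    [IsDiscreteValuationRing (Localization.AtPrime 𝔭)]
    (hπ𝔭 : algebraMap O R π ∈ 𝔭)
    (hgen : ∀ 𝔮 : Ideal R, 𝔮.IsPrime → algebraMap O R π ∈ 𝔮 → 𝔭 ≤ 𝔮)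
    (hdense : ∀ f : R, f ∉ 𝔭 → ∃ 𝔮 : Ideal R, 𝔮.IsPrime ∧ algebraMap O R π ∈ 𝔮 ∧ f ∉ 𝔮 ∧
      Nonempty (UnramifiedSection O R π 𝔮)) :
    Irreducible (algebraMap R (Localization.AtPrime 𝔭) (algebraMap O R π)) := by
  rw [IsDiscreteValuationRing.irreducible_iff_mem_maximalIdeal_and_notMem_maximalIdeal_sq,
    ← Localization.AtPrime.map_eq_maximalIdeal]
  refine ⟨Ideal.mem_map_of_mem _ hπ𝔭, ?_⟩
  rw [← Ideal.map_pow, IsLocalization.algebraMap_mem_map_algebraMap_iff 𝔭.primeCompl]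
  rintro ⟨s, hs, hsπ⟩
  obtain ⟨𝔮, h𝔮, hπ𝔮, hs𝔮, ⟨S⟩⟩ := hdense s hs
  exact S.mul_algebraMap_notMem_sq (hgen 𝔮 h𝔮 hπ𝔮) hs𝔮 hsπ

/-- **Density of unramified points forces generic reducedness of the special fiber.**
Let `𝒪_K` be a complete discrete valuation ring with uniformizer `π`, and `R` a normal
integral domain over `𝒪_K` with `X = Spec R`.  Assume the mod-`π` fiber `X_k` is
irreducible with generic point `𝔭` (i.e. `𝔭` is contained in every prime containing `π`).
If the set of closed points of `X_k` that are reductions of `𝒪_{K'}`-points of `X` for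
finite unramified extensions `K'/K` is Zariski dense in `X_k` (it meets every nonempty
basic open `D(f) ∩ X_k`), then `X_k` is generically reduced: the image of `π` in the
discrete valuation ring `R_𝔭` is a uniformizer (has valuation `1`). -/
theorem generically_reduced_of_dense_unramified_points
    (O : Type) [CommRing O] [IsDomain O] [IsDiscreteValuationRing O]
    [IsAdicComplete (IsLocalRing.maximalIdeal O) O]
    (π : O) (hπ : Irreducible π)
    (R : Type) [CommRing R] [IsDomain R] [IsIntegrallyClosed R] [Algebra O R]
    (𝔭 : Ideal R) [𝔭.IsPrime]
    [IsDomain (Localization.AtPrime 𝔭)]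
    [IsDiscreteValuationRing (Localization.AtPrime 𝔭)]
    (hπ𝔭 : algebraMap O R π ∈ 𝔭)
    (hgen : ∀ 𝔮 : Ideal R, 𝔮.IsPrime → algebraMap O R π ∈ 𝔮 → 𝔭 ≤ 𝔮)
    (hdense : ∀ f : R, f ∉ 𝔭 → ∃ 𝔮 : Ideal R, 𝔮.IsPrime ∧ algebraMap O R π ∈ 𝔮 ∧ f ∉ 𝔮 ∧
      Nonempty (UnramifiedSection O R π 𝔮)) :
    Irreducible (algebraMap R (Localization.AtPrime 𝔭) (algebraMap O R π)) :=
  generically_reduced_of_dense_unramified_points_general O π R 𝔭 hπ𝔭 hgen hdense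
end

section
/- Let K'/K be a finite Galois extension of fields with Galois group H, let A be a K-algebra, and set A' = A ⊗_K K'. Let M be an A'-module equipped with a semilinear H-action (i.e., h(a·m) = h(a)·h(m) for a ∈ A', where H acts on A' through the second factor). Then the natural map M^H ⊗_{A} A' → M is an isomorphism when M is finitely generated over A'. In particular for a finite A'-module M with semilinear H-action, M^H ⊗_K K' ≅ M as A'-modules. -/
/-!
Let `b` be a basis of `K'/K` and `b^∨` its dual basis for the trace form. The map
`m ↦ ∑ᵢ b^∨ᵢ ⊗ Tr(bᵢ • m)`, with `Tr = ∑_σ ρ σ : M → M^H`, is inverse to `a ⊗ x ↦ a • x`: one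
composite is the identity because `k = ∑ᵢ Tr(k bᵢ) b^∨ᵢ` in `K'`, the other because
`∑ᵢ b^∨ᵢ σ(bᵢ) = δ_{σ,1}`, which follows from the former by Dedekind's independence of characters.
-/

open TensorProduct

noncomputable section

variable (K K' A : Type) [Field K] [Field K'] [Algebra K K']
  [CommRing A] [Algebra K A]

/-- The Galois action of `σ ∈ H = Gal(K'/K)` on `A' = A ⊗_K K'` through the second factor. -/
def galAct (σ : K' ≃ₐ[K] K') : (A ⊗[K] K') →ₐ[K] (A ⊗[K] K') :=
  Algebra.TensorProduct.map (AlgHom.id K A) σ.toAlgHom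

variable (M : Type) [AddCommGroup M] [Module (A ⊗[K] K') M]
  [Module A M] [IsScalarTower A (A ⊗[K] K') M]

/-- The `A`-submodule of `H`-invariants `M^H` of an `A ⊗_K K'`-module `M` equipped with a
semilinear action `ρ` of `H = Gal(K'/K)`. -/
def invariants (ρ : (K' ≃ₐ[K] K') → M →+ M)
    (hsemi : ∀ (σ : K' ≃ₐ[K] K') (a : A ⊗[K] K') (m : M),
      ρ σ (a • m) = (galAct K K' A σ a) • (ρ σ m)) : Submodule A M where
  carrier := {m | ∀ σ, ρ σ m = m}
  add_mem' := by
    intro a b ha hb σ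
    rw [map_add, ha σ, hb σ]
  zero_mem' := by
    intro σ
    simp
  smul_mem' := by
    intro c m hm σ
    have h1 : c • m = (algebraMap A (A ⊗[K] K') c) • m := (algebraMap_smul _ c m).symm
    have h2 : galAct K K' A σ (algebraMap A (A ⊗[K] K') c) = algebraMap A (A ⊗[K] K') c := by
      simp [galAct, Algebra.TensorProduct.algebraMap_apply]
    rw [h1, hsemi, hm σ, h2, algebraMap_smul]

section Field

variable {F L : Type*} [Field F] [Field L] [Algebra F L] [FiniteDimensional F L]

theorem AlgEquiv.eq_ite_of_sum_mul_apply_eq_self [DecidableEq (L ≃ₐ[F] L)] {c : (L ≃ₐ[F] L) → L}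
    (hc : ∀ x, ∑ σ, c σ * σ x = x) (σ : L ≃ₐ[F] L) : c σ = if σ = 1 then 1 else 0 := by
  have hli : LinearIndependent L (fun σ : L ≃ₐ[F] L => (σ : L → L)) :=
    (linearIndependent_monoidHom L L).comp (fun σ : L ≃ₐ[F] L => (σ : L →* L)) fun _ _ h => by
      ext; exact DFunLike.ext_iff.1 h _
  have hsum : ∑ τ, (c τ - if τ = 1 then 1 else 0) • (τ : L → L) = 0 := by
    funext x
    simp [sub_mul, Finset.sum_sub_distrib, hc x]
  exact sub_eq_zero.1 (Fintype.linearIndependent_iff.1 hli _ hsum σ)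

variable [IsGalois F L] {ι : Type*} [Fintype ι] [DecidableEq ι]

theorem Module.Basis.sum_trace_mul_smul_traceDual (b : Basis ι F L) (x : L) :
    ∑ i, Algebra.trace F L (x * b i) • b.traceDual i = x := by
  simpa using b.traceDual.sum_repr x

theorem Module.Basis.sum_traceDual_mul_apply [DecidableEq (L ≃ₐ[F] L)] (b : Basis ι F L)
    (σ : L ≃ₐ[F] L) : ∑ i, b.traceDual i * σ (b i) = if σ = 1 then 1 else 0 := by
  refine AlgEquiv.eq_ite_of_sum_mul_apply_eq_self
    (c := fun σ => ∑ i, b.traceDual i * σ (b i)) (fun x => ?_) σ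
  conv_rhs => rw [← b.sum_trace_mul_smul_traceDual x]
  simp only [Algebra.smul_def, trace_eq_sum_automorphisms, Finset.sum_mul, map_mul]
  rw [Finset.sum_comm]
  exact Finset.sum_congr rfl fun σ _ => Finset.sum_congr rfl fun i _ => by ring

end Field

section Descent

variable {K K' A M}

theorem galAct_tmul (σ : K' ≃ₐ[K] K') (a : A) (k : K') :
    galAct K K' A σ (a ⊗ₜ k) = a ⊗ₜ σ k :=
  rfl

theorem one_tmul_algebraMap_smul (t : K) (m : M) :
    ((1 : A) ⊗ₜ[K] algebraMap K K' t) • m = algebraMap K A t • m := by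
  rw [← Algebra.TensorProduct.algebraMap_apply', IsScalarTower.algebraMap_apply K A (A ⊗[K] K'),
    algebraMap_smul]

variable [FiniteDimensional K K'] {ρ : (K' ≃ₐ[K] K') → M →+ M}
  {hsemi : ∀ (σ : K' ≃ₐ[K] K') (a : A ⊗[K] K') (m : M),
      ρ σ (a • m) = (galAct K K' A σ a) • (ρ σ m)}

theorem sum_apply_mem_invariants (hmul : ∀ σ τ : K' ≃ₐ[K] K', ρ (σ * τ) = (ρ σ).comp (ρ τ))
    (m : M) : ∑ σ, ρ σ m ∈ invariants K K' A M ρ hsemi := fun τ => by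
  rw [map_sum]
  exact Fintype.sum_equiv (Equiv.mulLeft τ) _ _ fun σ => by simp [hmul]

variable (hsemi) (hmul : ∀ σ τ : K' ≃ₐ[K] K', ρ (σ * τ) = (ρ σ).comp (ρ τ))

def galTrace : M →+ invariants K K' A M ρ hsemi :=
  (∑ σ, ρ σ).codRestrict _ fun m => by
    simpa only [AddMonoidHom.finsetSum_apply] using sum_apply_mem_invariants hmul m

variable {hsemi}

@[simp]
theorem coe_galTrace (m : M) : (galTrace hsemi hmul m : M) = ∑ σ, ρ σ m :=
  AddMonoidHom.finsetSum_apply _ _ _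

theorem galTrace_one_tmul_smul [IsGalois K K'] (k : K') (x : invariants K K' A M ρ hsemi) :
    galTrace hsemi hmul (((1 : A) ⊗ₜ[K] k) • (x : M)) =
      algebraMap K A (Algebra.trace K K' k) • x := by
  ext
  rw [coe_galTrace]
  calc ∑ σ, ρ σ (((1 : A) ⊗ₜ[K] k) • (x : M))
      = ∑ σ : K' ≃ₐ[K] K', ((1 : A) ⊗ₜ[K] σ k) • (x : M) := by
        simp only [hsemi, galAct_tmul, x.2 _]
    _ = ((1 : A) ⊗ₜ[K] algebraMap K K' (Algebra.trace K K' k)) • (x : M) := by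
      rw [trace_eq_sum_automorphisms, tmul_sum, Finset.sum_smul]
    _ = _ := one_tmul_algebraMap_smul _ _

variable [IsGalois K K'] {ι : Type*} [Fintype ι] [DecidableEq ι]

variable (hsemi) in
def descend (b : Module.Basis ι K K') : M →+ (A ⊗[K] K') ⊗[A] invariants K K' A M ρ hsemi :=
  ∑ i, (TensorProduct.mk A (A ⊗[K] K') _ ((1 : A) ⊗ₜ b.traceDual i)).toAddMonoidHom.comp
    ((galTrace hsemi hmul).comp (DistribSMul.toAddMonoidHom M ((1 : A) ⊗ₜ[K] b i)))

theorem descend_apply (b : Module.Basis ι K K') (m : M) :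
    descend hsemi hmul b m =
      ∑ i, ((1 : A) ⊗ₜ b.traceDual i) ⊗ₜ galTrace hsemi hmul (((1 : A) ⊗ₜ[K] b i) • m) := by
  simp [descend]

theorem liftBaseChange_descend (hone : ρ 1 = AddMonoidHom.id M) (b : Module.Basis ι K K')
    (m : M) :
    (invariants K K' A M ρ hsemi).subtype.liftBaseChange (A ⊗[K] K') (descend hsemi hmul b m) =
      m := by
  classical
  simp only [descend_apply, map_sum, LinearMap.liftBaseChange_tmul, Submodule.subtype_apply,
    coe_galTrace]
  calc ∑ i, ((1 : A) ⊗ₜ[K] b.traceDual i) • ∑ σ, ρ σ (((1 : A) ⊗ₜ[K] b i) • m)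
      = ∑ σ : K' ≃ₐ[K] K', ((1 : A) ⊗ₜ[K] ∑ i, b.traceDual i * σ (b i)) • ρ σ m := by
        simp only [hsemi, galAct_tmul, Finset.smul_sum, smul_smul,
          Algebra.TensorProduct.tmul_mul_tmul, one_mul, tmul_sum, Finset.sum_smul]
        exact Finset.sum_comm
    _ = ∑ σ : K' ≃ₐ[K] K', ((1 : A) ⊗ₜ[K] (if σ = 1 then 1 else 0 : K')) • ρ σ m := by
        simp only [b.sum_traceDual_mul_apply]
    _ = m := by
        rw [Fintype.sum_eq_single 1 fun σ hσ => by rw [if_neg hσ, tmul_zero, zero_smul],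
          if_pos rfl, ← Algebra.TensorProduct.one_def, one_smul, hone, AddMonoidHom.id_apply]

theorem descend_one_tmul_smul (b : Module.Basis ι K K') (k : K')
    (x : invariants K K' A M ρ hsemi) :
    descend hsemi hmul b (((1 : A) ⊗ₜ[K] k) • (x : M)) = ((1 : A) ⊗ₜ[K] k) ⊗ₜ x := by
  rw [descend_apply]
  calc ∑ i, ((1 : A) ⊗ₜ[K] b.traceDual i) ⊗ₜ
        galTrace hsemi hmul (((1 : A) ⊗ₜ[K] b i) • ((1 : A) ⊗ₜ[K] k) • (x : M))
      = ∑ i, ((1 : A) ⊗ₜ[K] b.traceDual i) ⊗ₜ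
          (algebraMap K A (Algebra.trace K K' (k * b i)) • x) := by
        simp only [smul_smul, Algebra.TensorProduct.tmul_mul_tmul, one_mul,
          galTrace_one_tmul_smul, mul_comm]
    _ = ∑ i, ((1 : A) ⊗ₜ[K] (Algebra.trace K K' (k * b i) • b.traceDual i)) ⊗ₜ x := by
        refine Finset.sum_congr rfl fun i _ => ?_
        rw [← smul_tmul, algebraMap_smul, tmul_smul]
    _ = ((1 : A) ⊗ₜ[K] k) ⊗ₜ x := by
        rw [← sum_tmul, ← tmul_sum, b.sum_trace_mul_smul_traceDual]

theorem descend_liftBaseChange (b : Module.Basis ι K K')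
    (z : (A ⊗[K] K') ⊗[A] invariants K K' A M ρ hsemi) :
    descend hsemi hmul b
      ((invariants K K' A M ρ hsemi).subtype.liftBaseChange (A ⊗[K] K') z) = z := by
  induction z using TensorProduct.induction_on with
  | zero => simp
  | add z w hz hw => rw [map_add, map_add, hz, hw]
  | tmul a x =>
    induction a using TensorProduct.induction_on with
    | zero => simp
    | add a c ha hc => rw [add_tmul, map_add, map_add, ha, hc]
    | tmul α k =>
      have hsplit : (α ⊗ₜ[K] k) ⊗ₜ[A] x = ((1 : A) ⊗ₜ[K] k) ⊗ₜ (α • x) := by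
        rw [← smul_tmul, smul_tmul', smul_eq_mul, mul_one]
      rw [hsplit, LinearMap.liftBaseChange_tmul, Submodule.subtype_apply, descend_one_tmul_smul]

end Descent

theorem galois_descent_bijective [IsGalois K K'] [FiniteDimensional K K']
    (ρ : (K' ≃ₐ[K] K') → M →+ M)
    (hone : ρ 1 = AddMonoidHom.id M)
    (hmul : ∀ σ τ : K' ≃ₐ[K] K', ρ (σ * τ) = (ρ σ).comp (ρ τ))
    (hsemi : ∀ (σ : K' ≃ₐ[K] K') (a : A ⊗[K] K') (m : M),
      ρ σ (a • m) = (galAct K K' A σ a) • (ρ σ m)) :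
    Function.Bijective
      ((invariants K K' A M ρ hsemi).subtype.liftBaseChange (A ⊗[K] K')) := by
  let b := Module.finBasis K K'
  exact Function.bijective_iff_has_inverse.2 ⟨descend hsemi hmul b,
    descend_liftBaseChange hmul b, liftBaseChange_descend hmul hone b⟩
end
end

section
/- Let K be a complete discretely valued field with ring of integers 𝒪_K, uniformizer π, and perfect residue field. Let 𝒪_{K'} be a finite extension with ramification index e, so π = v·β^e in 𝒪_{K'} for a unit v and uniformizer β. Let g̃ ∈ 𝒪_{K'}[[s₁,…,s_n]] be a power series with zero constant term, h ∈ 𝒪_{K'}[[s₁,…,s_n]] with constant term h₀, and u ∈ 𝒪_K^× a unit with u ≢ h₀ modulo the maximal ideal when h₀ is a unit. If β₁,…,β_n ∈ 𝒪_{K'} satisfy val_π(β_i) > 0 for all i and g̃(β₁,…,β_n)^p + π·h(β₁,…,β_n) = u·π, then val_π(β_i) ≤ 1/p for some i. -/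
/-!
If every `b i` had `val_π(b i) > 1/p`, i.e. `β^(⌊e/p⌋+1) ∣ b i`, then `G` would be divisible by
`β^(⌊e/p⌋+1)` and `G^p` by `β^(e+1)`. Since `G^p = π·(u - H)` with `π = v·β^e`, this forces
`β ∣ u - H`; together with `β ∣ H - h₀` (the `b i` have positive valuation) it gives
`β ∣ u - h₀`, a contradiction.
-/

theorem dvd_of_mem_span_range {R ι : Type*} [CommSemiring R] {b : ι → R} {a x : R}
    (hb : ∀ i, a ∣ b i) (hx : x ∈ Ideal.span (Set.range b)) : a ∣ x :=
  Ideal.mem_span_singleton.1 <|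
    Ideal.span_le.2 (Set.range_subset_iff.2 fun i => Ideal.mem_span_singleton.2 (hb i)) hx

theorem pow_succ_dvd_pow_of_pow_div_succ_dvd {R : Type*} [CommMonoid R] {β G : R} {e p : ℕ}
    (hp : 0 < p) (hG : β ^ (e / p + 1) ∣ G) : β ^ (e + 1) ∣ G ^ p :=
  (pow_dvd_pow β (Nat.lt_mul_div_succ e hp)).trans <| by
    rw [mul_comm, pow_mul]
    exact pow_dvd_pow_of_dvd hG p

theorem dvd_of_pow_succ_dvd_pow_mul {R : Type*} [MonoidWithZero R] [IsLeftCancelMulZero R]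
    {β x : R} (hβ : β ≠ 0) {e : ℕ} (h : β ^ (e + 1) ∣ β ^ e * x) : β ∣ x := by
  rw [pow_succ] at h
  exact (mul_dvd_mul_iff_left (pow_ne_zero e hβ)).1 h

theorem exists_small_valuation_general
    (O' : Type) [CommRing O'] [IsDomain O']
    (p : ℕ) (hp : p.Prime)
    (β : O') (hβ : Irreducible β)
    (e : ℕ) (π : O') (v : O'ˣ) (hπ : π = v * β ^ e)
    (u h₀ : O') (huh : ¬ β ∣ (u - h₀))
    (n : ℕ) (b : Fin n → O') (hb : ∀ i, β ∣ b i)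
    (G H : O') (hG : G ∈ Ideal.span (Set.range b))
    (hH : H - h₀ ∈ Ideal.span (Set.range b))
    (heq : G ^ p + π * H = u * π) :
    ∃ (i : Fin n) (m : ℕ), p * m ≤ e ∧ ¬ β ^ (m + 1) ∣ b i := by
  by_contra! hcon
  have hGp : β ^ (e + 1) ∣ G ^ p :=
    pow_succ_dvd_pow_of_pow_div_succ_dvd hp.pos <|
      dvd_of_mem_span_range (fun i => hcon i (e / p) (Nat.mul_div_le e p)) hG
  have hGp_eq : G ^ p = β ^ e * (v * (u - H)) := by
    rw [hπ] at heq
    linear_combination heq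
  have huH : β ∣ u - H :=
    Units.dvd_mul_left.1 (dvd_of_pow_succ_dvd_pow_mul hβ.ne_zero (hGp_eq ▸ hGp))
  exact huh (by simpa only [sub_add_sub_cancel] using dvd_add huH (dvd_of_mem_span_range hb hH))

/-- **Forced ramification at a well-chosen point.**
Let `𝒪'` be a discrete valuation ring with uniformizer `β`, and let `π = v·β^e` (`v` a unit,
`e ≥ 1`), so that the valuation normalized by `val_π(π) = 1` is `val_π(x) = v_β(x)/e`.
Let `u` be a unit and `h₀` an element with `u − h₀` not in the maximal ideal, and let
`b₁, …, b_n` be elements of positive valuation (`β ∣ b i`).  Suppose `G` lies in the ideal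
generated by the `b i` (this is the value `g̃(b₁,…,b_n)` of a power series with zero constant
term) and `H ≡ h₀` modulo that ideal (the value `h(b₁,…,b_n)` of a power series with constant
term `h₀`).  If `G^p + π·H = u·π`, then `val_π(b i) ≤ 1/p` for some `i`; equivalently, for
some `i` and some `m` with `p·m ≤ e`, `β^(m+1)` does not divide `b i`. -/
theorem exists_small_valuation
    (O' : Type) [CommRing O'] [IsDomain O'] [IsDiscreteValuationRing O']
    (p : ℕ) (hp : p.Prime)
    (β : O') (hβ : Irreducible β)
    (e : ℕ) (he : 1 ≤ e) (π : O') (v : O'ˣ) (hπ : π = v * β ^ e)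
    (u h₀ : O') (hu : IsUnit u) (huh : ¬ β ∣ (u - h₀))
    (n : ℕ) (b : Fin n → O') (hb : ∀ i, β ∣ b i)
    (G H : O') (hG : G ∈ Ideal.span (Set.range b))
    (hH : H - h₀ ∈ Ideal.span (Set.range b))
    (heq : G ^ p + π * H = u * π) :
    ∃ (i : Fin n) (m : ℕ), p * m ≤ e ∧ ¬ β ^ (m + 1) ∣ b i :=
  exists_small_valuation_general O' p hp β hβ e π v hπ u h₀ huh n b hb G H hG hH heq
end

section
/- Let R be a commutative ring, let M₀ be an R-module with a nilpotent R-linear endomorphism N₀ (N₀^m = 0), and let S = R[ℓ] be the polynomial ring in one variable ℓ over R. Define N : M₀ ⊗_R S → M₀ ⊗_R S by N = N₀ ⊗ id + id ⊗ ∂, where ∂ is the R-linear derivation on S with ∂(ℓ^i) = i ℓ^{i−1}. Assume ℚ ⊆ R. Then M₀ ⊗_R S is generated as an S-module by ker(N); explicitly, the S-module generated by the elements ψ(x) := Σ_{i=0}^{m} ((−N₀)^i(x)/i!) ℓ^i for x ∈ M₀ equals M₀ ⊗_R S, and each ψ(x) lies in ker(N). -/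
open TensorProduct Polynomial

noncomputable section

variable (R : Type) [CommRing R] [Algebra ℚ R]
variable (M₀ : Type) [AddCommGroup M₀] [Module R M₀]

/-- The operator `N = id ⊗ N₀ + ∂/∂ℓ ⊗ id` on `M = R[ℓ] ⊗_R M₀ = M₀[ℓ]`, sending
`Σ xᵢ ℓ^i` to `Σ (N₀(xᵢ) + (i+1)·x_{i+1}) ℓ^i`. -/
def NOp (N₀ : M₀ →ₗ[R] M₀) :
    (Polynomial R ⊗[R] M₀) →ₗ[R] (Polynomial R ⊗[R] M₀) :=
  TensorProduct.map LinearMap.id N₀ +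
    TensorProduct.map (Polynomial.derivative : Polynomial R →ₗ[R] Polynomial R) LinearMap.id

/-- The section `ψ : M₀ → M₀[ℓ]`, `ψ(x) = Σ_{i=0}^{m} ((−N₀)^i(x)/i!) ℓ^i`. -/
def psiMap (N₀ : M₀ →ₗ[R] M₀) (m : ℕ) (x : M₀) : Polynomial R ⊗[R] M₀ :=
  ∑ i ∈ Finset.range (m + 1),
    (algebraMap ℚ R ((Nat.factorial i : ℚ)⁻¹)) •
      ((Polynomial.X ^ i : Polynomial R) ⊗ₜ[R] (((-N₀) ^ i) x))

lemma NOp_apply_tmul (N₀ : M₀ →ₗ[R] M₀) (p : Polynomial R) (x : M₀) :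
    NOp R M₀ N₀ (p ⊗ₜ[R] x) = p ⊗ₜ[R] (N₀ x) + (derivative p) ⊗ₜ[R] x := by
  simp [NOp]

lemma fact_mul (i : ℕ) :
    ((Nat.factorial (i+1) : ℚ)⁻¹) * (((i+1 : ℕ) : ℚ)) = ((Nat.factorial i : ℚ)⁻¹) := by
  rw [Nat.factorial_succ]
  push_cast
  rw [mul_inv]
  have h1 : ((i : ℚ) + 1) ≠ 0 := by positivity
  have h2 : ((Nat.factorial i : ℚ)) ≠ 0 := by
    exact_mod_cast Nat.cast_ne_zero.mpr (Nat.factorial_ne_zero i)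
  field_simp

lemma psi_ker (N₀ : M₀ →ₗ[R] M₀) (m : ℕ) (hN : N₀ ^ m = 0) (x : M₀) :
    NOp R M₀ N₀ (psiMap R M₀ N₀ m x) = 0 := by
  classical
  set b : ℕ → Polynomial R ⊗[R] M₀ := fun i =>
    (algebraMap ℚ R ((Nat.factorial i : ℚ)⁻¹)) •
      ((X ^ i : Polynomial R) ⊗ₜ[R] (((-N₀) ^ (i+1)) x)) with hb
  have hnegpow : (-N₀) ^ m = 0 := by
    rw [neg_pow, hN, mul_zero]
  have hbm : b m = 0 := by
    have : ((-N₀) ^ (m+1)) x = 0 := by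
      simp [pow_succ, Module.End.mul_apply, hnegpow]
    simp [hb, this]
  set t : ℕ → Polynomial R ⊗[R] M₀ := fun i =>
    (algebraMap ℚ R ((Nat.factorial i : ℚ)⁻¹)) •
      ((X ^ i : Polynomial R) ⊗ₜ[R] (((-N₀) ^ i) x)) with ht
  have hNterm : ∀ i : ℕ, N₀ (((-N₀) ^ i) x) = -(((-N₀) ^ (i+1)) x) := by
    intro i
    have : (-N₀) ^ (i+1) = -(N₀ * (-N₀) ^ i) := by
      rw [pow_succ', neg_mul]
    rw [this]
    simp [Module.End.mul_apply]
  have term0 : NOp R M₀ N₀ (t 0) = -(b 0) := by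
    simp only [ht, hb, pow_zero, Nat.factorial_zero, Nat.cast_one, inv_one, map_one, one_smul]
    rw [NOp_apply_tmul]
    simp [hNterm 0, TensorProduct.tmul_neg]
  have termS : ∀ i : ℕ, NOp R M₀ N₀ (t (i+1)) = b i - b (i+1) := by
    intro i
    simp only [ht, hb, map_smul]
    rw [NOp_apply_tmul, smul_add]
    have hd : (derivative (X ^ (i+1) : Polynomial R)) = C (((i+1 : ℕ)) : R) * X ^ i := by
      rw [derivative_X_pow]
      norm_num
    rw [hNterm (i+1), TensorProduct.tmul_neg, hd, ← Polynomial.smul_eq_C_mul,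
      ← TensorProduct.smul_tmul', smul_smul]
    have hsc : (algebraMap ℚ R ((Nat.factorial (i+1) : ℚ)⁻¹)) * (((i+1 : ℕ)) : R)
        = algebraMap ℚ R ((Nat.factorial i : ℚ)⁻¹) := by
      rw [show (((i+1 : ℕ)) : R) = algebraMap ℚ R (((i+1 : ℕ)) : ℚ) by
        rw [map_natCast], ← map_mul, fact_mul]
    rw [hsc]
    rw [smul_neg]
    abel
  have : NOp R M₀ N₀ (psiMap R M₀ N₀ m x) = ∑ i ∈ Finset.range (m+1), NOp R M₀ N₀ (t i) := by
    rw [psiMap, map_sum]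
  rw [this, Finset.sum_range_succ']
  simp only [termS, term0]
  rw [Finset.sum_range_sub']
  rw [hbm]
  abel

lemma one_tmul_mem (N₀ : M₀ →ₗ[R] M₀) (m : ℕ) :
    ∀ (k : ℕ) (x : M₀), (N₀ ^ k) x = 0 →
      (1 : Polynomial R) ⊗ₜ[R] x ∈
        Submodule.span (Polynomial R) (Set.range (psiMap R M₀ N₀ m)) := by
  intro k
  induction k with
  | zero =>
    intro x hx
    simp only [pow_zero, Module.End.one_apply] at hx
    simp [hx]
  | succ k ih =>
    intro x hx
    have hpsi : psiMap R M₀ N₀ m x ∈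
        Submodule.span (Polynomial R) (Set.range (psiMap R M₀ N₀ m)) :=
      Submodule.subset_span ⟨x, rfl⟩
    have hx1 : (1 : Polynomial R) ⊗ₜ[R] x = psiMap R M₀ N₀ m x -
        ∑ i ∈ Finset.range m, (algebraMap ℚ R ((Nat.factorial (i+1) : ℚ)⁻¹)) •
          ((X ^ (i+1) : Polynomial R) ⊗ₜ[R] (((-N₀) ^ (i+1)) x)) := by
      rw [psiMap, Finset.sum_range_succ']
      simp
    rw [hx1]
    refine sub_mem hpsi (Submodule.sum_mem _ ?_)
    intro i _
    have hki : (N₀ ^ k) (((-N₀) ^ (i+1)) x) = 0 := by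
      have e1 : (-N₀) ^ (i+1) = (-1 : R) ^ (i+1) • N₀ ^ (i+1) := by
        rw [show -N₀ = (-1 : R) • N₀ by simp, _root_.smul_pow]
      have h3 : (N₀ ^ k) ((N₀ ^ (i+1)) x) = (N₀ ^ i) ((N₀ ^ (k+1)) x) := by
        rw [← Module.End.mul_apply, ← Module.End.mul_apply, ← pow_add, ← pow_add,
          show k + (i+1) = i + (k+1) by omega]
      rw [e1]
      simp only [LinearMap.smul_apply, map_smul, h3, hx, map_zero, smul_zero]
    have hmem : (1 : Polynomial R) ⊗ₜ[R] (((-N₀) ^ (i+1)) x) ∈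
        Submodule.span (Polynomial R) (Set.range (psiMap R M₀ N₀ m)) := ih _ hki
    have heq : (X ^ (i+1) : Polynomial R) ⊗ₜ[R] (((-N₀) ^ (i+1)) x)
        = (X ^ (i+1) : Polynomial R) • ((1 : Polynomial R) ⊗ₜ[R] (((-N₀) ^ (i+1)) x)) := by
      rw [TensorProduct.smul_tmul', smul_eq_mul, mul_one]
    rw [heq]
    exact Submodule.smul_of_tower_mem _ _ (Submodule.smul_mem _ _ hmem)

/-- **The kernel of the monodromy operator generates.**
Let `R` be a commutative `ℚ`-algebra, `M₀` an `R`-module with a nilpotent endomorphism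
`N₀` (`N₀^m = 0`), and `S = R[ℓ]`.  On `M = M₀ ⊗_R S` consider
`N = N₀ ⊗ id + id ⊗ ∂/∂ℓ`.  Then every `ψ(x) = Σ_{i=0}^{m} ((−N₀)^i(x)/i!)·ℓ^i` lies in
`ker(N)`, the `S`-module generated by the `ψ(x)` is all of `M`, and in particular `M` is
generated as an `S`-module by `ker(N)`. -/
theorem span_ker_NOp_eq_top (N₀ : M₀ →ₗ[R] M₀) (m : ℕ) (hN : N₀ ^ m = 0) :
    (∀ x : M₀, NOp R M₀ N₀ (psiMap R M₀ N₀ m x) = 0) ∧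
    Submodule.span (Polynomial R) (Set.range (psiMap R M₀ N₀ m)) = ⊤ ∧
    Submodule.span (Polynomial R) {y : Polynomial R ⊗[R] M₀ | NOp R M₀ N₀ y = 0} = ⊤ := by
  have hker : ∀ x : M₀, NOp R M₀ N₀ (psiMap R M₀ N₀ m x) = 0 :=
    fun x => psi_ker R M₀ N₀ m hN x
  have hspan : Submodule.span (Polynomial R) (Set.range (psiMap R M₀ N₀ m)) = ⊤ := by
    rw [Submodule.eq_top_iff']
    intro z
    induction z using TensorProduct.induction_on with
    | zero => exact zero_mem _
    | tmul p x =>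
      have h1 : (N₀ ^ m) x = 0 := by rw [hN]; rfl
      have h2 := one_tmul_mem R M₀ N₀ m m x h1
      have heq : p ⊗ₜ[R] x = p • ((1 : Polynomial R) ⊗ₜ[R] x) := by
        rw [TensorProduct.smul_tmul', smul_eq_mul, mul_one]
      rw [heq]
      exact Submodule.smul_mem _ _ h2
    | add a b ha hb => exact add_mem ha hb
  refine ⟨hker, hspan, ?_⟩
  have hsub : Set.range (psiMap R M₀ N₀ m) ⊆
      {y : Polynomial R ⊗[R] M₀ | NOp R M₀ N₀ y = 0} := by
    rintro y ⟨x, rfl⟩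
    exact hker x
  exact top_unique (hspan ▸ Submodule.span_mono hsub)
end
end

section
/- In the setting of the previous statement (R a ℚ-algebra, M₀ an R-module, N₀ nilpotent, M = M₀[ℓ] with N = N₀ ⊗ id + id ⊗ ∂/∂ℓ), the kernel of N on M equals exactly the image of the map ψ : M₀ → M, ψ(x) = Σ_{i=0}^{m} ((−N₀)^i(x)/i!) ℓ^i, and ψ is injective; hence ker(N) ≅ M₀ as R-modules. -/
open TensorProduct Polynomial

noncomputable section

variable (R : Type) [CommRing R] [Algebra ℚ R]
variable (M₀ : Type) [AddCommGroup M₀] [Module R M₀]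

/-!
Writing `y = ∑ yᵢ ℓⁱ`, the equation `N y = 0` is the recursion `(i + 1) yᵢ₊₁ = -N₀ yᵢ`. Over a
`ℚ`-algebra it determines `y` from its constant term: `yᵢ = (-N₀)ⁱ y₀ / i!`, the coefficients of
`exp (-ℓ N₀) y₀`. Since `N₀ ^ m = 0` these vanish for `i ≥ m`, so `y = ψ y₀`, and conversely
every `ψ x` satisfies the recursion.
-/

def polyTensorCoeff (A M : Type*) [CommSemiring A] [AddCommMonoid M] [Module A M] :
    A[X] ⊗[A] M ≃ₗ[A] (ℕ →₀ M) :=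
  (basisMonomials A).repr.rTensor M ≪≫ₗ TensorProduct.finsuppScalarLeft A M ℕ

@[simp]
lemma polyTensorCoeff_tmul_apply {A M : Type*} [CommSemiring A] [AddCommMonoid M] [Module A M]
    (p : A[X]) (x : M) (i : ℕ) : polyTensorCoeff A M (p ⊗ₜ x) i = p.coeff i • x := by
  simp only [polyTensorCoeff, LinearEquiv.trans_apply, LinearEquiv.rTensor_tmul,
    TensorProduct.finsuppScalarLeft_apply_tmul_apply]
  rfl

lemma polyTensorCoeff_NOp_apply {A M : Type} [CommRing A] [AddCommGroup M] [Module A M]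
    (N₀ : M →ₗ[A] M) (y : A[X] ⊗[A] M) (i : ℕ) :
    polyTensorCoeff A M (NOp A M N₀ y) i =
      N₀ (polyTensorCoeff A M y i) + (i + 1) • polyTensorCoeff A M y (i + 1) := by
  induction y using TensorProduct.induction_on with
  | zero => simp
  | tmul p x =>
    simp only [NOp, LinearMap.add_apply, TensorProduct.map_tmul, LinearMap.id_coe, id_eq,
      map_add, Finsupp.add_apply, polyTensorCoeff_tmul_apply, coeff_derivative, map_smul,
      ← Nat.cast_smul_eq_nsmul A, smul_smul]
    push_cast
    ring_nf
  | add y z hy hz =>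
    simp only [map_add, Finsupp.add_apply, hy, hz, smul_add]
    abel

lemma NOp_eq_zero_iff {A M : Type} [CommRing A] [AddCommGroup M] [Module A M]
    (N₀ : M →ₗ[A] M) (y : A[X] ⊗[A] M) :
    NOp A M N₀ y = 0 ↔
      ∀ i, N₀ (polyTensorCoeff A M y i) + (i + 1) • polyTensorCoeff A M y (i + 1) = 0 := by
  simp only [← (polyTensorCoeff A M).map_eq_zero_iff, Finsupp.ext_iff, polyTensorCoeff_NOp_apply,
    Finsupp.coe_zero, Pi.zero_apply]

lemma nsmul_right_injective_of_algebraRat (A : Type*) {M : Type*} [Semiring A] [Algebra ℚ A]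
    [AddCommMonoid M] [Module A M] {n : ℕ} (hn : n ≠ 0) : Function.Injective (n • · : M → M) := by
  have cancel (u : M) : algebraMap ℚ A (n : ℚ)⁻¹ • n • u = u := by
    rw [← Nat.cast_smul_eq_nsmul A, smul_smul, ← map_natCast (algebraMap ℚ A), ← map_mul,
      inv_mul_cancel₀ (Nat.cast_ne_zero.mpr hn), map_one, one_smul]
  exact Function.LeftInverse.injective cancel

section

variable {R M₀}

/-- The coefficients of `exp (-ℓ N₀) x`. -/
def expCoeff (N₀ : M₀ →ₗ[R] M₀) (x : M₀) (i : ℕ) : M₀ :=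
  algebraMap ℚ R ((Nat.factorial i : ℚ)⁻¹) • ((-N₀) ^ i) x

@[simp]
lemma expCoeff_zero (N₀ : M₀ →ₗ[R] M₀) (x : M₀) : expCoeff N₀ x 0 = x := by
  simp [expCoeff]

lemma expCoeff_eq_zero_of_pow_eq_zero {N₀ : M₀ →ₗ[R] M₀} {m i : ℕ} (hN : N₀ ^ m = 0)
    (hi : m ≤ i) (x : M₀) : expCoeff N₀ x i = 0 := by
  rw [expCoeff, neg_pow, ← Nat.sub_add_cancel hi, pow_add N₀, hN]
  simp

lemma succ_nsmul_expCoeff_succ (N₀ : M₀ →ₗ[R] M₀) (x : M₀) (i : ℕ) :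
    (i + 1) • expCoeff N₀ x (i + 1) = -N₀ (expCoeff N₀ x i) := by
  have hfact : ((i + 1 : ℕ) : R) * algebraMap ℚ R ((Nat.factorial (i + 1) : ℚ)⁻¹) =
      algebraMap ℚ R ((Nat.factorial i : ℚ)⁻¹) := by
    rw [← map_natCast (algebraMap ℚ R), ← map_mul, Nat.factorial_succ, Nat.cast_mul, mul_inv,
      ← mul_assoc, mul_inv_cancel₀ (Nat.cast_ne_zero.mpr i.succ_ne_zero), one_mul]
  rw [expCoeff, expCoeff, ← Nat.cast_smul_eq_nsmul R, smul_smul, hfact, pow_succ',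
    Module.End.mul_apply, map_smul, LinearMap.neg_apply, smul_neg]

lemma forall_add_succ_nsmul_eq_zero_iff_eq_expCoeff (N₀ : M₀ →ₗ[R] M₀) (v : ℕ → M₀) :
    (∀ i, N₀ (v i) + (i + 1) • v (i + 1) = 0) ↔ v = expCoeff N₀ (v 0) := by
  refine ⟨fun h => funext fun i => ?_, fun h i => ?_⟩
  · induction i with
    | zero => rw [expCoeff_zero]
    | succ i ih =>
      refine nsmul_right_injective_of_algebraRat R (n := i + 1) i.succ_ne_zero ?_
      dsimp only
      rw [succ_nsmul_expCoeff_succ, ← ih]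
      exact eq_neg_of_add_eq_zero_right (h i)
  · rw [h, succ_nsmul_expCoeff_succ, add_neg_cancel]

lemma coe_polyTensorCoeff_psiMap {N₀ : M₀ →ₗ[R] M₀} {m : ℕ} (hN : N₀ ^ m = 0) (x : M₀) :
    ⇑(polyTensorCoeff R M₀ (psiMap R M₀ N₀ m x)) = expCoeff N₀ x := by
  funext i
  simp only [psiMap, map_sum, map_smul, Finset.sum_apply', Finsupp.smul_apply,
    polyTensorCoeff_tmul_apply, coeff_X_pow, ite_smul, one_smul, zero_smul, smul_ite, smul_zero,
    Finset.sum_ite_eq, Finset.mem_range]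
  split_ifs with hi
  · rfl
  · exact (expCoeff_eq_zero_of_pow_eq_zero hN (by omega) x).symm

end

/-- **The kernel of the monodromy operator is `ψ(M₀) ≅ M₀`.**
Let `R` be a commutative `ℚ`-algebra, `M₀` an `R`-module with a nilpotent endomorphism
`N₀` (`N₀^m = 0`), and `M = M₀ ⊗_R R[ℓ]` with `N = N₀ ⊗ id + id ⊗ ∂/∂ℓ`.  Then the map
`ψ : M₀ → M`, `ψ(x) = Σ_{i=0}^{m} ((−N₀)^i(x)/i!)·ℓ^i`, is injective and its image is
exactly `ker(N)`; hence `ker(N) ≅ M₀` as `R`-modules. -/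
theorem ker_NOp_eq_range_psi (N₀ : M₀ →ₗ[R] M₀) (m : ℕ) (hN : N₀ ^ m = 0) :
    Function.Injective (psiMap R M₀ N₀ m) ∧
    (∀ y : Polynomial R ⊗[R] M₀,
      NOp R M₀ N₀ y = 0 ↔ y ∈ Set.range (psiMap R M₀ N₀ m)) := by
  have coeff_psi := coe_polyTensorCoeff_psiMap (R := R) hN
  refine ⟨fun x x' h => ?_, fun y => ?_⟩
  · simpa [coeff_psi] using congr_arg (polyTensorCoeff R M₀ · 0) h
  · rw [NOp_eq_zero_iff, forall_add_succ_nsmul_eq_zero_iff_eq_expCoeff]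
    constructor
    · intro hy
      exact ⟨_, (polyTensorCoeff R M₀).injective <|
        DFunLike.coe_injective ((coeff_psi _).trans hy.symm)⟩
    · rintro ⟨x, rfl⟩
      rw [coeff_psi, expCoeff_zero]
end
end
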